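/- Let a, b ∈ ℤ with b ≥ a + 1, n ≥ 1, H : ℝⁿ → ℝ be continuously differentiable with partial derivatives H'_1, …, H'_n, and for i = 1, …, n and each t ∈ ℤ with a + 1 ≤ t ≤ b let (y, v) ↦ f_i(t, y, v) be a continuously differentiable function from ℝ² to ℝ with partial derivatives f_{iy} and f_{iv}. Suppose x̃ : ℤ → ℝ satisfies x̃(b) = x_b (the value x(a) is not specified), and x̃ is a local extremizer of L[x] = H(F_1[x], …, F_n[x]): there exists δ > 0 such that L[x̃] ≤ L[x] for every x : ℤ → ℝ with x(b) = x_b and |x(t) − x̃(t)| < δ for all integers t with a ≤ t ≤ b (or L[x̃] ≥ L[x] for all such x). Then the natural boundary condition ∑_{i=1}^{n} H'_i(F_1[x̃], …, F_n[x̃]) · ( f_{iy}(a+1, x̃(a), ∇x̃(a+1)) − f_{iv}(a+1, x̃(a), ∇x̃(a+1)) ) = 0 holds. -/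

import Mathlib

/-!
Vary only the free endpoint value `x a`. Since `x a` enters `F_i[x]` only through the term
`t = a + 1`, where it occurs both as `x(t - 1)` and in `∇x(t) = x(a + 1) - x(a)`, the
derivative of `s ↦ F_i[x̃ with x(a) := s]` at `s = x̃(a)` is `f_{iy} - f_{iv}` there. Such
variations keep `x(b) = x_b` and stay uniformly close to `x̃`, so `s = x̃(a)` is a local extremum
of `s ↦ L[x̃ with x(a) := s]`, and the chain rule through `H` turns Fermat's theorem into the
natural boundary condition.
-/

open Finset Filter Topology Function

/-- The nabla integral `∫_a^b g(t, x^ρ(t), x^∇(t)) ∇t` on the time scale `ℤ`. -/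
noncomputable def nablaSum (a b : ℤ) (g : ℤ → ℝ → ℝ → ℝ) (x : ℤ → ℝ) : ℝ :=
  ∑ t ∈ Icc (a + 1) b, g t (x (t - 1)) (x t - x (t - 1))

theorem nablaSum_update_left {a b : ℤ} (hab : a + 1 ≤ b) (g : ℤ → ℝ → ℝ → ℝ) (x : ℤ → ℝ)
    (s : ℝ) :
    nablaSum a b g (update x a s) =
      nablaSum a b g x + (g (a + 1) s (x (a + 1) - s) - g (a + 1) (x a) (x (a + 1) - x a)) := by
  have hmem : a + 1 ∈ Icc (a + 1) b := mem_Icc.2 ⟨le_rfl, hab⟩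
  have hrest : ∀ t ∈ (Icc (a + 1) b).erase (a + 1),
      g t (update x a s (t - 1)) (update x a s t - update x a s (t - 1)) =
        g t (x (t - 1)) (x t - x (t - 1)) := by
    intro t ht
    rw [mem_erase, mem_Icc] at ht
    rw [update_of_ne (by omega), update_of_ne (by omega)]
  unfold nablaSum
  rw [← add_sum_erase _ _ hmem, ← add_sum_erase _ _ hmem, sum_congr rfl hrest,
    add_sub_cancel_right, update_self, update_of_ne (by omega)]
  ring

theorem hasDerivAt_apply_sub_of_partials {E : Type*} [NormedAddCommGroup E] [NormedSpace ℝ E]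
    {φ : ℝ → ℝ → E} {y z : ℝ} {dy dv : E}
    (hφ : DifferentiableAt ℝ (fun p : ℝ × ℝ => φ p.1 p.2) (y, z - y))
    (hy : HasDerivAt (fun y' => φ y' (z - y)) dy y)
    (hv : HasDerivAt (fun v' => φ y v') dv (z - y)) :
    HasDerivAt (fun s => φ s (z - s)) (dy - dv) y := by
  set D := fderiv ℝ (fun p : ℝ × ℝ => φ p.1 p.2) (y, z - y)
  have hD := hφ.hasFDerivAt
  have hDy : D (1, 0) = dy := by
    have h := hD.comp_hasDerivAt y ((hasDerivAt_id' y).prodMk (hasDerivAt_const y (z - y)))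
    exact h.unique hy
  have hDv : D (0, 1) = dv := by
    have h := hD.comp_hasDerivAt (z - y)
      ((hasDerivAt_const (z - y) y).prodMk (hasDerivAt_id' (z - y)))
    exact h.unique hv
  have hcurve : HasDerivAt (fun s => ((s, z - s) : ℝ × ℝ)) ((1, 0) - (0, 1)) y := by
    simpa using (hasDerivAt_id y).prodMk ((hasDerivAt_const y z).sub (hasDerivAt_id y))
  have h := hD.comp_hasDerivAt y hcurve
  rwa [map_sub, hDy, hDv] at h

theorem eventually_abs_update_sub_lt {ι : Type*} [DecidableEq ι] (x : ι → ℝ) (a : ι)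
    {δ : ℝ} (hδ : 0 < δ) :
    ∀ᶠ s in 𝓝 (x a), ∀ t, |update x a s t - x t| < δ := by
  filter_upwards [Metric.ball_mem_nhds (x a) hδ] with s hs t
  rcases eq_or_ne t a with rfl | ht
  · simpa [Real.dist_eq] using hs
  · simpa [update_of_ne ht] using hδ

theorem discrete_composite_natural_boundary_left_general
    (a b : ℤ) (hab : a + 1 ≤ b) (n : ℕ)
    (H : (Fin n → ℝ) → ℝ) (hH : ContDiff ℝ 1 H)
    (f fy fv : Fin n → ℤ → ℝ → ℝ → ℝ)
    (hf : ∀ i : Fin n, ∀ t : ℤ, a + 1 ≤ t → t ≤ b →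
      ContDiff ℝ 1 (fun p : ℝ × ℝ => f i t p.1 p.2))
    (hfy : ∀ i : Fin n, ∀ t : ℤ, a + 1 ≤ t → t ≤ b → ∀ y v : ℝ,
      HasDerivAt (fun y' => f i t y' v) (fy i t y v) y)
    (hfv : ∀ i : Fin n, ∀ t : ℤ, a + 1 ≤ t → t ≤ b → ∀ y v : ℝ,
      HasDerivAt (fun v' => f i t y v') (fv i t y v) v)
    (xb : ℝ) (xE : ℤ → ℝ)
    (hxEb : xE b = xb)
    (F : (ℤ → ℝ) → Fin n → ℝ)
    (hF : ∀ x i, F x i = ∑ t ∈ Finset.Icc (a + 1) b, f i t (x (t - 1)) (x t - x (t - 1)))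
    (L : (ℤ → ℝ) → ℝ)
    (hL : ∀ x, L x = H (F x))
    (hext :
      (∃ δ > 0, ∀ x : ℤ → ℝ, x b = xb →
        (∀ t : ℤ, a ≤ t → t ≤ b → |x t - xE t| < δ) → L xE ≤ L x) ∨
      (∃ δ > 0, ∀ x : ℤ → ℝ, x b = xb →
        (∀ t : ℤ, a ≤ t → t ≤ b → |x t - xE t| < δ) → L x ≤ L xE)) :
    ∑ i, fderiv ℝ H (F xE) (Pi.single i 1) *
      (fy i (a + 1) (xE a) (xE (a + 1) - xE a) -
        fv i (a + 1) (xE a) (xE (a + 1) - xE a)) = 0 := by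
  set w : Fin n → ℝ := fun i =>
    fy i (a + 1) (xE a) (xE (a + 1) - xE a) - fv i (a + 1) (xE a) (xE (a + 1) - xE a)
  set Φ : ℝ → Fin n → ℝ := fun s i =>
    F xE i + (f i (a + 1) s (xE (a + 1) - s) - f i (a + 1) (xE a) (xE (a + 1) - xE a))
  have hLΦ : ∀ s, L (update xE a s) = H (Φ s) := fun s => by
    have hFn : ∀ x i, F x i = nablaSum a b (f i) x := hF
    rw [hL]
    congr 1
    funext i
    rw [hFn, nablaSum_update_left hab, ← hFn]
  have hΦ : HasDerivAt Φ w (xE a) := hasDerivAt_pi.2 fun i =>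
    ((hasDerivAt_apply_sub_of_partials
      (((hf i _ le_rfl hab).differentiable one_ne_zero).differentiableAt)
      (hfy i _ le_rfl hab _ _) (hfv i _ le_rfl hab _ _)).sub_const _).const_add _
  have hderiv : HasDerivAt (fun s => L (update xE a s)) (fderiv ℝ H (F xE) w) (xE a) := by
    simp only [hLΦ]
    exact ((hH.differentiable one_ne_zero) _).hasFDerivAt.comp_hasDerivAt_of_eq (xE a) hΦ
      (by funext i; simp [Φ])
  have hb : ∀ s, update xE a s b = xb := fun s => by rw [update_of_ne (by omega), hxEb]
  have hextr : IsLocalExtr (fun s => L (update xE a s)) (xE a) := by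
    rcases hext with ⟨δ, hδ, hmin⟩ | ⟨δ, hδ, hmax⟩
    · refine .inl ((eventually_abs_update_sub_lt xE a hδ).mono fun s hs => ?_)
      simpa using hmin _ (hb s) fun t _ _ => hs t
    · refine .inr ((eventually_abs_update_sub_lt xE a hδ).mono fun s hs => ?_)
      simpa using hmax _ (hb s) fun t _ _ => hs t
  rw [← hextr.hasDerivAt_eq_zero hderiv, pi_eq_sum_univ' w, map_sum]
  simp only [map_smul, smul_eq_mul]
  exact sum_congr rfl fun i _ => mul_comm _ _

/-- Natural boundary condition at `a` on the time scale ℤ for the composite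
functional `L[x] = H(F₁[x], …, F_n[x])`, where
`F_i[x] = ∑_{t=a+1}^{b} f_i(t, x(t-1), ∇x(t))` with `∇x(t) = x(t) - x(t-1)`,
when `x(b) = x_b` is fixed and `x(a)` is free. -/
theorem discrete_composite_natural_boundary_left
    (a b : ℤ) (hab : a + 1 ≤ b) (n : ℕ) (hn : 1 ≤ n)
    (H : (Fin n → ℝ) → ℝ) (hH : ContDiff ℝ 1 H)
    (f fy fv : Fin n → ℤ → ℝ → ℝ → ℝ)
    (hf : ∀ i : Fin n, ∀ t : ℤ, a + 1 ≤ t → t ≤ b →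
      ContDiff ℝ 1 (fun p : ℝ × ℝ => f i t p.1 p.2))
    (hfy : ∀ i : Fin n, ∀ t : ℤ, a + 1 ≤ t → t ≤ b → ∀ y v : ℝ,
      HasDerivAt (fun y' => f i t y' v) (fy i t y v) y)
    (hfv : ∀ i : Fin n, ∀ t : ℤ, a + 1 ≤ t → t ≤ b → ∀ y v : ℝ,
      HasDerivAt (fun v' => f i t y v') (fv i t y v) v)
    (xb : ℝ) (xE : ℤ → ℝ)
    (hxEb : xE b = xb)
    (F : (ℤ → ℝ) → Fin n → ℝ)
    (hF : ∀ x i, F x i = ∑ t ∈ Finset.Icc (a + 1) b, f i t (x (t - 1)) (x t - x (t - 1)))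
    (L : (ℤ → ℝ) → ℝ)
    (hL : ∀ x, L x = H (F x))
    (hext :
      (∃ δ > 0, ∀ x : ℤ → ℝ, x b = xb →
        (∀ t : ℤ, a ≤ t → t ≤ b → |x t - xE t| < δ) → L xE ≤ L x) ∨
      (∃ δ > 0, ∀ x : ℤ → ℝ, x b = xb →
        (∀ t : ℤ, a ≤ t → t ≤ b → |x t - xE t| < δ) → L x ≤ L xE)) :
    ∑ i, fderiv ℝ H (F xE) (Pi.single i 1) *
      (fy i (a + 1) (xE a) (xE (a + 1) - xE a) -
        fv i (a + 1) (xE a) (xE (a + 1) - xE a)) = 0 :=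
  discrete_composite_natural_boundary_left_general a b hab n H hH f fy fv hf hfy hfv xb xE hxEb F hF
    L hL hext
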